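/- For all n ≥ 2, the number of nonnesting permutations of the multiset {1,1,2,2,…,n,n} that avoid all three patterns 123, 213, and 312 equals n + 2. -/

import Mathlib

/-- `w` is a permutation of the multiset `{1,1,2,2,…,n,n}`:
a word in which every value in `{1,…,n}` occurs exactly twice
and no other value occurs. -/
def IsMultisetPerm (n : ℕ) (w : List ℕ) : Prop :=
  ∀ i : ℕ, w.count i = if 1 ≤ i ∧ i ≤ n then 2 else 0

/-- `t` is order-isomorphic to the word `σ`:
same length, and entries compare (both `<` and `=`) in the same way. -/
def OrderIsoWord (t σ : List ℕ) : Prop :=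
  t.length = σ.length ∧
  ∀ r s : ℕ, r < σ.length → s < σ.length →
    ((t.getD r 0 < t.getD s 0 ↔ σ.getD r 0 < σ.getD s 0) ∧
     (t.getD r 0 = t.getD s 0 ↔ σ.getD r 0 = σ.getD s 0))

/-- `w` contains the pattern `σ`: some subsequence of `w`
is order-isomorphic to `σ`. -/
def Contains (w σ : List ℕ) : Prop :=
  ∃ t : List ℕ, t.Sublist w ∧ OrderIsoWord t σ

/-- `w` avoids the pattern `σ`. -/
def Avoids (w σ : List ℕ) : Prop := ¬ Contains w σ

/-- `w` is a nonnesting permutation of `{1,1,2,2,…,n,n}`: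
it avoids the patterns `1221` and `2112`. -/
def IsNonnesting (n : ℕ) (w : List ℕ) : Prop :=
  IsMultisetPerm n w ∧ Avoids w [1,2,2,1] ∧ Avoids w [2,1,1,2]

/-!
Let `a` be the smallest letter of a word `w` in which each of `a, …, b` occurs twice, and write
`w = w₁ a w₂ a w₃`. A letter `x` before an `a` and a letter `y > a` after it form `x a y`, an
occurrence of `213` or `312` unless `x = y`. As `a + 1` and `a + 2` both occur when `b ≥ a + 2`,
some side of each `a` is empty, so `w = a a u` or `w = u a a`; the remaining case `w = a w₂ a`
contains `1221`. In the first case avoiding `123` makes `u` weakly decreasing, so `u` is unique;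
in the second, `u` is a word of the same kind on one letter fewer, and appending `a a` to such a
word creates none of the five patterns. The four words on two letters then give
`4 + (n - 2) = n + 2` words.
-/

open scoped List

namespace List

variable {α : Type*} {t u v w : List α} {a x y p q : α}

theorem Sublist.of_cons_sublist_append (h : a :: t <+ v ++ u) (ha : a ∉ v) : a :: t <+ u := by
  obtain ⟨_ | ⟨b, s⟩, s', he, hs, hs'⟩ := sublist_append_iff.1 h
  · simpa [he] using hs'
  · obtain ⟨rfl, -⟩ := cons_eq_cons.1 (he.trans (cons_append ..))
    exact absurd (hs.subset mem_cons_self) ha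

theorem Sublist.of_append_singleton_sublist_append (h : t ++ [a] <+ v ++ u) (ha : a ∉ u) :
    t ++ [a] <+ v := by
  have h' : a :: t.reverse <+ u.reverse ++ v.reverse := by simpa using h.reverse
  simpa using (h'.of_cons_sublist_append (by simpa using ha)).reverse

theorem eq_of_mem_append_of_forall_eq (hx : x ∈ u) (hy : y ∈ v) (h : ∀ p ∈ u, ∀ q ∈ v, p = q)
    (hp : p ∈ u ++ v) (hq : q ∈ u ++ v) : p = q := by
  have key : ∀ r ∈ u ++ v, r = y := fun r hr => by
    rcases mem_append.1 hr with hr | hr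
    · exact h r hr y hy
    · exact (h x hx r hr).symm.trans (h x hx y hy)
  rw [key p hp, key q hq]

theorem exists_eq_append_cons_append_cons_of_count_eq_two [DecidableEq α] (h : w.count a = 2) :
    ∃ w₁ w₂ w₃, w = w₁ ++ a :: w₂ ++ a :: w₃ ∧ a ∉ w₁ ∧ a ∉ w₂ ∧ a ∉ w₃ := by
  obtain ⟨s, t, rfl, hs⟩ := eq_append_cons_of_mem (count_pos_iff.1 (by rw [h]; omega))
  have ht : t.count a = 1 := by
    simp only [count_append, count_eq_zero.2 hs, count_cons_self] at h
    omega
  obtain ⟨s', t', rfl, hs'⟩ := eq_append_cons_of_mem (count_pos_iff.1 (by rw [ht]; omega))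
  refine ⟨s, s', t', by simp, hs, hs', count_eq_zero.1 ?_⟩
  simp only [count_append, count_eq_zero.2 hs', count_cons_self] at ht
  omega

end List

section Patterns

variable {w v : List ℕ}

theorem contains_123_iff :
    Contains w [1,2,3] ↔ ∃ x y z, [x,y,z] <+ w ∧ x < y ∧ y < z := by
  constructor
  · rintro ⟨t, ht, hl, h⟩
    obtain ⟨x, y, z, rfl⟩ := List.length_eq_three.1 hl
    exact ⟨x, y, z, ht, (h 0 1 (by simp) (by simp)).1.2 (by simp),
      (h 1 2 (by simp) (by simp)).1.2 (by simp)⟩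
  · rintro ⟨x, y, z, ht, hxy, hyz⟩
    refine ⟨_, ht, rfl, fun r s hr hs => ?_⟩
    simp only [List.length_cons, List.length_nil] at hr hs
    interval_cases r <;> interval_cases s <;> simp <;> omega

theorem contains_213_iff :
    Contains w [2,1,3] ↔ ∃ x y z, [x,y,z] <+ w ∧ y < x ∧ x < z := by
  constructor
  · rintro ⟨t, ht, hl, h⟩
    obtain ⟨x, y, z, rfl⟩ := List.length_eq_three.1 hl
    exact ⟨x, y, z, ht, (h 1 0 (by simp) (by simp)).1.2 (by simp),
      (h 0 2 (by simp) (by simp)).1.2 (by simp)⟩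
  · rintro ⟨x, y, z, ht, hyx, hxz⟩
    refine ⟨_, ht, rfl, fun r s hr hs => ?_⟩
    simp only [List.length_cons, List.length_nil] at hr hs
    interval_cases r <;> interval_cases s <;> simp <;> omega

theorem contains_312_iff :
    Contains w [3,1,2] ↔ ∃ x y z, [x,y,z] <+ w ∧ y < z ∧ z < x := by
  constructor
  · rintro ⟨t, ht, hl, h⟩
    obtain ⟨x, y, z, rfl⟩ := List.length_eq_three.1 hl
    exact ⟨x, y, z, ht, (h 1 2 (by simp) (by simp)).1.2 (by simp),
      (h 2 0 (by simp) (by simp)).1.2 (by simp)⟩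
  · rintro ⟨x, y, z, ht, hyz, hzx⟩
    refine ⟨_, ht, rfl, fun r s hr hs => ?_⟩
    simp only [List.length_cons, List.length_nil] at hr hs
    interval_cases r <;> interval_cases s <;> simp <;> omega

theorem contains_1221_iff :
    Contains w [1,2,2,1] ↔ ∃ x y, [x,y,y,x] <+ w ∧ x < y := by
  constructor
  · rintro ⟨t, ht, hl, h⟩
    obtain ⟨x, y, y', x', rfl⟩ := List.length_eq_four.1 hl
    obtain rfl : y = y' := (h 1 2 (by simp) (by simp)).2.2 (by simp)
    obtain rfl : x = x' := (h 0 3 (by simp) (by simp)).2.2 (by simp)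
    exact ⟨x, y, ht, (h 0 1 (by simp) (by simp)).1.2 (by simp)⟩
  · rintro ⟨x, y, ht, hxy⟩
    refine ⟨_, ht, rfl, fun r s hr hs => ?_⟩
    simp only [List.length_cons, List.length_nil] at hr hs
    interval_cases r <;> interval_cases s <;> simp <;> omega

theorem contains_2112_iff :
    Contains w [2,1,1,2] ↔ ∃ x y, [y,x,x,y] <+ w ∧ x < y := by
  constructor
  · rintro ⟨t, ht, hl, h⟩
    obtain ⟨y, x, x', y', rfl⟩ := List.length_eq_four.1 hl
    obtain rfl : x = x' := (h 1 2 (by simp) (by simp)).2.2 (by simp)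
    obtain rfl : y = y' := (h 0 3 (by simp) (by simp)).2.2 (by simp)
    exact ⟨x, y, ht, (h 1 0 (by simp) (by simp)).1.2 (by simp)⟩
  · rintro ⟨x, y, ht, hxy⟩
    refine ⟨_, ht, rfl, fun r s hr hs => ?_⟩
    simp only [List.length_cons, List.length_nil] at hr hs
    interval_cases r <;> interval_cases s <;> simp <;> omega

theorem Avoids.sublist {σ : List ℕ} (h : Avoids w σ) (hvw : v <+ w) : Avoids v σ :=
  fun ⟨t, htv, ht⟩ => h ⟨t, htv.trans hvw, ht⟩

end Patterns

structure Admissible (w : List ℕ) : Prop where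
  avoids_1221 : Avoids w [1,2,2,1]
  avoids_2112 : Avoids w [2,1,1,2]
  avoids_123 : Avoids w [1,2,3]
  avoids_213 : Avoids w [2,1,3]
  avoids_312 : Avoids w [3,1,2]

theorem Admissible.sublist {v w : List ℕ} (h : Admissible w) (hvw : v <+ w) : Admissible v :=
  ⟨h.1.sublist hvw, h.2.sublist hvw, h.3.sublist hvw, h.4.sublist hvw, h.5.sublist hvw⟩

theorem admissible_pair_append {a : ℕ} {d : List ℕ} (hd : ∀ x ∈ d, a < x)
    (hdec : d.Pairwise (· ≥ ·)) : Admissible ([a,a] ++ d) := by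
  have hsub : ∀ {c : ℕ} {t : List ℕ}, c :: t <+ [a,a] ++ d → a < c → c :: t <+ d :=
    fun h hc => h.of_cons_sublist_append (by simpa using hc.ne')
  have hle : ∀ {p q : ℕ} {t : List ℕ}, [p, q] <+ t → t <+ d → q ≤ p :=
    fun hpq ht => List.pairwise_iff_forall_sublist.1 hdec (hpq.trans ht)
  have hge : ∀ {t : List ℕ}, t <+ [a,a] ++ d → ∀ x ∈ t, a ≤ x := fun h x hx => by
    rcases List.mem_append.1 (h.subset hx) with hx | hx
    · simp_all
    · exact (hd x hx).le
  refine ⟨?_, ?_, ?_, ?_, ?_⟩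
  · rw [Avoids, contains_1221_iff]
    rintro ⟨x, y, h, hxy⟩
    rcases (hge h x (by simp)).lt_or_eq with hx | rfl
    · have := hle (p := x) (q := y) (by simp) (hsub h hx)
      omega
    · have := hsub ((List.sublist_cons_self _ _).trans h) hxy
      exact (hd a (this.subset (by simp))).false
  · rw [Avoids, contains_2112_iff]
    rintro ⟨x, y, h, hxy⟩
    have := hle (p := x) (q := y) (by simp) (hsub h (by have := hge h x (by simp); omega))
    omega
  · rw [Avoids, contains_123_iff]
    rintro ⟨x, y, z, h, hxy, hyz⟩
    have := hle (p := y) (q := z) (.refl _)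
      (hsub ((List.sublist_cons_self _ _).trans h) (by have := hge h x (by simp); omega))
    omega
  · rw [Avoids, contains_213_iff]
    rintro ⟨x, y, z, h, hyx, hxz⟩
    have := hle (p := y) (q := z) (by simp) (hsub h (by have := hge h y (by simp); omega))
    omega
  · rw [Avoids, contains_312_iff]
    rintro ⟨x, y, z, h, hyz, hzx⟩
    have := hle (p := y) (q := z) (by simp) (hsub h (by have := hge h y (by simp); omega))
    omega

theorem Admissible.append_pair {a : ℕ} {v : List ℕ} (hv : Admissible v) (ha : ∀ x ∈ v, a < x) :
    Admissible (v ++ [a,a]) := by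
  have hsub : ∀ {t : List ℕ} {z : ℕ}, t ++ [z] <+ v ++ [a,a] → a < z → t ++ [z] <+ v :=
    fun h hz => h.of_append_singleton_sublist_append (by simpa using hz.ne')
  have hge : ∀ {t : List ℕ}, t <+ v ++ [a,a] → ∀ x ∈ t, a ≤ x := fun h x hx => by
    rcases List.mem_append.1 (h.subset hx) with hx | hx
    · exact (ha x hx).le
    · simp_all
  refine ⟨?_, ?_, ?_, ?_, ?_⟩
  · rw [Avoids, contains_1221_iff]
    rintro ⟨x, y, h, hxy⟩
    rcases (hge h x (by simp)).lt_or_eq with hx | rfl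
    · exact hv.avoids_1221 (contains_1221_iff.2 ⟨x, y, hsub (t := [x,y,y]) h hx, hxy⟩)
    · exact absurd (h.of_cons_sublist_append fun hx => (ha _ hx).false).length_le (by simp)
  · rw [Avoids, contains_2112_iff]
    rintro ⟨x, y, h, hxy⟩
    have hy : a < y := by have := hge h x (by simp); omega
    exact hv.avoids_2112 (contains_2112_iff.2 ⟨x, y, hsub (t := [y,x,x]) h hy, hxy⟩)
  · rw [Avoids, contains_123_iff]
    rintro ⟨x, y, z, h, hxy, hyz⟩
    have hz : a < z := by have := hge h y (by simp); omega
    exact hv.avoids_123 (contains_123_iff.2 ⟨x, y, z, hsub (t := [x,y]) h hz, hxy, hyz⟩)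
  · rw [Avoids, contains_213_iff]
    rintro ⟨x, y, z, h, hyx, hxz⟩
    have hz : a < z := by have := hge h x (by simp); omega
    exact hv.avoids_213 (contains_213_iff.2 ⟨x, y, z, hsub (t := [x,y]) h hz, hyx, hxz⟩)
  · rw [Avoids, contains_312_iff]
    rintro ⟨x, y, z, h, hyz, hzx⟩
    have hz : a < z := by have := hge h y (by simp); omega
    exact hv.avoids_312 (contains_312_iff.2 ⟨x, y, z, hsub (t := [x,y]) h hz, hyz, hzx⟩)

theorem admissible_alternating {a b : ℕ} (hab : a ≠ b) : Admissible [a,b,a,b] := by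
  have hval : ∀ {t : List ℕ}, t <+ [a,b,a,b] → ∀ x ∈ t, x = a ∨ x = b := fun h x hx => by
    have := h.subset hx
    simp only [List.mem_cons, List.not_mem_nil, or_false] at this
    tauto
  refine ⟨?_, ?_, ?_, ?_, ?_⟩
  · rw [Avoids, contains_1221_iff]
    rintro ⟨x, y, h, -⟩
    have := h.eq_of_length rfl
    simp only [List.cons.injEq] at this
    omega
  · rw [Avoids, contains_2112_iff]
    rintro ⟨x, y, h, -⟩
    have := h.eq_of_length rfl
    simp only [List.cons.injEq] at this
    omega
  all_goals
    simp only [Avoids, contains_123_iff, contains_213_iff, contains_312_iff]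
    rintro ⟨x, y, z, h, h₁, h₂⟩
    rcases hval h x (by simp) with hx | hx <;> rcases hval h y (by simp) with hy | hy <;>
      rcases hval h z (by simp) with hz | hz <;> omega

def IsDoubledRange (a b : ℕ) (w : List ℕ) : Prop :=
  ∀ i : ℕ, w.count i = if a ≤ i ∧ i ≤ b then 2 else 0

section DoubledRange

variable {a b : ℕ} {u w : List ℕ}

theorem IsDoubledRange.mem_bounds (hw : IsDoubledRange a b w) {x : ℕ} (hx : x ∈ w) :
    a ≤ x ∧ x ≤ b := by
  by_contra h
  have := hw x
  rw [if_neg h] at this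
  exact List.count_eq_zero.1 this hx

theorem IsDoubledRange.count_eq_two (hw : IsDoubledRange a b w) {i : ℕ} (hai : a ≤ i)
    (hib : i ≤ b) : w.count i = 2 := by
  rw [hw i, if_pos ⟨hai, hib⟩]

theorem IsDoubledRange.perm (hu : IsDoubledRange a b u) (hw : IsDoubledRange a b w) : u ~ w :=
  List.perm_iff_count.2 fun i => by rw [hu i, hw i]

theorem IsDoubledRange.exists_eq_append_cons_append_cons (hw : IsDoubledRange a b w)
    (hab : a ≤ b) : ∃ w₁ w₂ w₃, w = w₁ ++ a :: w₂ ++ a :: w₃ ∧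
      IsDoubledRange (a + 1) b (w₁ ++ w₂ ++ w₃) := by
  obtain ⟨w₁, w₂, w₃, rfl, h₁, h₂, h₃⟩ :=
    List.exists_eq_append_cons_append_cons_of_count_eq_two (hw.count_eq_two le_rfl hab)
  refine ⟨w₁, w₂, w₃, rfl, fun i => ?_⟩
  have := hw i
  rcases eq_or_ne i a with rfl | hia
  · simp [List.count_eq_zero, h₁, h₂, h₃]
  · simp only [List.count_append, List.count_cons, beq_iff_eq] at this ⊢
    split_ifs at this ⊢ <;> omega

theorem isDoubledRange_append_pair_iff (hab : a ≤ b) :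
    IsDoubledRange a b (u ++ [a,a]) ↔ IsDoubledRange (a + 1) b u := by
  refine forall_congr' fun i => ?_
  simp only [List.count_append, List.count_cons, List.count_nil, beq_iff_eq]
  split_ifs <;> omega

theorem isDoubledRange_pair_append_iff (hab : a ≤ b) :
    IsDoubledRange a b ([a,a] ++ u) ↔ IsDoubledRange (a + 1) b u := by
  simp only [IsDoubledRange, List.perm_append_comm.count_eq]
  exact isDoubledRange_append_pair_iff hab

end DoubledRange

def descPairs (b : ℕ) : ℕ → List ℕ
  | 0 => [b, b]
  | k + 1 => [b + k + 1, b + k + 1] ++ descPairs b k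

theorem isDoubledRange_descPairs (b k : ℕ) : IsDoubledRange b (b + k) (descPairs b k) := by
  induction k with
  | zero =>
    intro i
    simp only [descPairs, List.count_cons, List.count_nil, beq_iff_eq]
    split_ifs <;> omega
  | succ k ih =>
    intro i
    simp only [descPairs, List.count_append, List.count_cons, List.count_nil, beq_iff_eq, ih i]
    split_ifs <;> omega

theorem pairwise_descPairs (b k : ℕ) : (descPairs b k).Pairwise (· ≥ ·) := by
  induction k with
  | zero => simp [descPairs]
  | succ k ih =>
    have hle : ∀ x ∈ descPairs b k, x ≤ b + k := fun x hx =>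
      ((isDoubledRange_descPairs b k).mem_bounds hx).2
    simp only [descPairs, List.pairwise_append, ih]
    grind

theorem eq_of_mem_of_avoids_213_312 {s t : List ℕ} {a x y : ℕ}
    (h213 : Avoids (s ++ a :: t) [2,1,3]) (h312 : Avoids (s ++ a :: t) [3,1,2])
    (hx : x ∈ s) (hy : y ∈ t) (hax : a < x) (hay : a < y) : x = y := by
  have h : [x, a, y] <+ s ++ a :: t :=
    (List.singleton_sublist.2 hx).append ((List.singleton_sublist.2 hy).cons_cons a)
  rcases lt_trichotomy x y with hxy | rfl | hxy
  · exact absurd (contains_213_iff.2 ⟨x, a, y, h, hax, hxy⟩) h213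
  · rfl
  · exact absurd (contains_312_iff.2 ⟨x, a, y, h, hay, hxy⟩) h312

theorem eq_pair_append_or_eq_append_pair {a b : ℕ} {w : List ℕ} (hw : IsDoubledRange a b w)
    (hab : a + 2 ≤ b) (h : Admissible w) : (∃ u, w = [a,a] ++ u) ∨ ∃ u, w = u ++ [a,a] := by
  obtain ⟨w₁, w₂, w₃, rfl, hrest⟩ := hw.exists_eq_append_cons_append_cons (by omega)
  have hgt : ∀ x ∈ w₁ ++ w₂ ++ w₃, a < x := fun x hx => (hrest.mem_bounds hx).1
  have hmem : ∀ i, a < i → i ≤ b → i ∈ w₁ ++ w₂ ++ w₃ := fun i hai hib =>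
    List.count_pos_iff.1 (by rw [hrest.count_eq_two hai hib]; omega)
  have hall : ∀ {u v : List ℕ}, u ++ v = w₁ ++ w₂ ++ w₃ → ∀ {x y : ℕ}, x ∈ u → y ∈ v →
      ¬∀ p ∈ u, ∀ q ∈ v, p = q := fun he x y hx hy huv => by
    have := List.eq_of_mem_append_of_forall_eq hx hy huv (he ▸ hmem (a + 1) (by omega) (by omega))
      (he ▸ hmem (a + 2) (by omega) (by omega))
    omega
  have cross₁ : ∀ p ∈ w₁, ∀ q ∈ w₂ ++ w₃, p = q := fun p hp q hq => by
    rw [List.append_assoc] at h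
    exact eq_of_mem_of_avoids_213_312 h.avoids_213 h.avoids_312 hp
      (List.mem_append.2 ((List.mem_append.1 hq).imp_right (List.mem_cons_of_mem a)))
      (hgt p (by simp [hp])) (hgt q (by simp [hq]))
  have cross₂ : ∀ p ∈ w₂, ∀ q ∈ w₃, p = q := fun p hp q hq =>
    eq_of_mem_of_avoids_213_312 h.avoids_213 h.avoids_312 (by simp [hp]) hq
      (hgt p (by simp [hp])) (hgt q (by simp [hq]))
  by_cases hw₁ : w₁ = []
  · subst hw₁
    have hw₃ : w₃ ≠ [] := by
      rintro rfl
      have h₂ : List.replicate 2 (a + 1) <+ w₂ := List.replicate_sublist_iff.2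
        (by simpa using (hrest.count_eq_two (i := a + 1) (by omega) (by omega)).ge)
      exact h.avoids_1221 (contains_1221_iff.2
        ⟨a, a + 1, by simpa using (h₂.append_right [a]).cons_cons a, by omega⟩)
    obtain rfl : w₂ = [] := List.eq_nil_iff_forall_not_mem.2 fun x hx => by
      obtain ⟨y, hy⟩ := List.exists_mem_of_ne_nil _ hw₃
      exact hall (by simp) hx hy cross₂
    exact Or.inl ⟨w₃, rfl⟩
  · have hw₂₃ : w₂ ++ w₃ = [] := List.eq_nil_iff_forall_not_mem.2 fun y hy => by
      obtain ⟨x, hx⟩ := List.exists_mem_of_ne_nil _ hw₁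
      exact hall (List.append_assoc ..).symm hx hy cross₁
    obtain ⟨rfl, rfl⟩ := List.append_eq_nil_iff.1 hw₂₃
    exact Or.inr ⟨w₁, by simp⟩

theorem eq_descPairs_of_avoids_123 {a k : ℕ} {u : List ℕ}
    (hw : IsDoubledRange a (a + 1 + k) ([a,a] ++ u)) (h : Avoids ([a,a] ++ u) [1,2,3]) :
    u = descPairs (a + 1) k := by
  have hu := (isDoubledRange_pair_append_iff (by omega)).1 hw
  have hdec : u.Pairwise (· ≥ ·) := List.pairwise_iff_forall_sublist.2 fun {p q} hpq => by
    by_contra hlt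
    have hp := (hu.mem_bounds (x := p) (hpq.subset (by simp))).1
    exact h (contains_123_iff.2
      ⟨a, p, q, by simpa using (hpq.cons a).cons_cons a, by omega, by omega⟩)
  exact (hu.perm (isDoubledRange_descPairs (a + 1) k)).eq_of_pairwise' hdec
    (pairwise_descPairs (a + 1) k)

def admissibleWords : ℕ → ℕ → List (List ℕ)
  | a, 0 => [[a, a, a + 1, a + 1], [a, a + 1, a, a + 1], [a + 1, a, a + 1, a], [a + 1, a + 1, a, a]]
  | a, m + 1 =>
    ([a, a] ++ descPairs (a + 1) (m + 1)) :: (admissibleWords (a + 1) m).map (· ++ [a, a])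

theorem mem_admissibleWords_zero_iff {a : ℕ} {w : List ℕ} :
    w ∈ admissibleWords a 0 ↔ IsDoubledRange a (a + 1) w ∧ Admissible w := by
  constructor
  · simp only [admissibleWords, List.mem_cons, List.not_mem_nil, or_false]
    rintro (rfl | rfl | rfl | rfl) <;> refine ⟨fun i => by
      simp only [List.count_cons, List.count_nil, beq_iff_eq]; split_ifs <;> omega, ?_⟩
    · exact admissible_pair_append (d := [a + 1, a + 1]) (by simp) (by simp)
    · exact admissible_alternating (by omega)
    · exact admissible_alternating (by omega)
    · exact (admissible_pair_append (a := a + 1) (d := []) (by simp) (by simp)).append_pair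
        (by simp)
  · rintro ⟨hw, h⟩
    have hperm : w ∈ List.permutations [a, a, a + 1, a + 1] := List.mem_permutations.2 <|
      hw.perm fun i => by
        simp only [List.count_cons, List.count_nil, beq_iff_eq]
        split_ifs <;> omega
    have h₁ : ¬Admissible [a, a + 1, a + 1, a] := fun h =>
      h.avoids_1221 (contains_1221_iff.2 ⟨a, a + 1, .refl _, by omega⟩)
    have h₂ : ¬Admissible [a + 1, a, a, a + 1] := fun h =>
      h.avoids_2112 (contains_2112_iff.2 ⟨a, a + 1, .refl _, by omega⟩)
    suffices ∀ v ∈ List.permutations [a, a, a + 1, a + 1], Admissible v →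
        v ∈ admissibleWords a 0 from this w hperm h
    simp [List.permutations, List.permutationsAux, List.permutationsAux.rec, admissibleWords,
      h₁, h₂]

theorem mem_admissibleWords_iff {a m : ℕ} {w : List ℕ} :
    w ∈ admissibleWords a m ↔ IsDoubledRange a (a + m + 1) w ∧ Admissible w := by
  induction m generalizing a w with
  | zero => exact mem_admissibleWords_zero_iff
  | succ m ih =>
    rw [show a + (m + 1) + 1 = a + 1 + (m + 1) by omega]
    simp only [admissibleWords, List.mem_cons, List.mem_map]
    constructor
    · rintro (rfl | ⟨v, hv, rfl⟩)
      · have hd := isDoubledRange_descPairs (a + 1) (m + 1)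
        exact ⟨(isDoubledRange_pair_append_iff (by omega)).2 hd,
          admissible_pair_append (fun x hx => (hd.mem_bounds hx).1) (pairwise_descPairs _ _)⟩
      · obtain ⟨hv, h⟩ := ih.1 hv
        exact ⟨(isDoubledRange_append_pair_iff (by omega)).2 hv,
          h.append_pair fun x hx => (hv.mem_bounds hx).1⟩
    · rintro ⟨hw, h⟩
      rcases eq_pair_append_or_eq_append_pair hw (by omega) h with ⟨u, rfl⟩ | ⟨u, rfl⟩
      · exact Or.inl (congrArg _ (eq_descPairs_of_avoids_123 hw h.avoids_123))
      · exact Or.inr ⟨u, ih.2 ⟨(isDoubledRange_append_pair_iff (by omega)).1 hw,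
          h.sublist (List.sublist_append_left _ _)⟩, rfl⟩

theorem length_admissibleWords (a m : ℕ) : (admissibleWords a m).length = m + 4 := by
  induction m generalizing a with
  | zero => rfl
  | succ m ih => simp [admissibleWords, ih]

theorem nodup_admissibleWords (a m : ℕ) : (admissibleWords a m).Nodup := by
  induction m generalizing a with
  | zero =>
    simp [admissibleWords]
  | succ m ih =>
    refine List.nodup_cons.2 ⟨?_, (ih (a + 1)).map (List.append_left_injective _)⟩
    rintro hmem
    obtain ⟨v, hv, he⟩ := List.mem_map.1 hmem
    have hv := (mem_admissibleWords_iff.1 hv).1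
    cases v with
    | nil =>
      simpa using hv.count_eq_two (i := a + 1) le_rfl (by omega)
    | cons x v =>
      obtain ⟨rfl, -⟩ := List.cons_eq_cons.1 he
      have := hv.mem_bounds (x := x) (by simp)
      omega

theorem nonnesting_avoid_123_213_312 (n : ℕ) (hn : 2 ≤ n) :
    {w : List ℕ | IsNonnesting n w ∧
      Avoids w [1,2,3] ∧ Avoids w [2,1,3] ∧ Avoids w [3,1,2]}.ncard = n + 2 := by
  obtain ⟨m, rfl⟩ : ∃ m, n = 1 + m + 1 := ⟨n - 2, by omega⟩
  have hset : {w : List ℕ | IsNonnesting (1 + m + 1) w ∧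
      Avoids w [1,2,3] ∧ Avoids w [2,1,3] ∧ Avoids w [3,1,2]} = (admissibleWords 1 m).toFinset := by
    ext w
    simp only [Set.mem_ofPred_eq, List.coe_toFinset, mem_admissibleWords_iff]
    exact ⟨fun ⟨⟨hw, h1221, h2112⟩, h123, h213, h312⟩ => ⟨hw, h1221, h2112, h123, h213, h312⟩,
      fun ⟨hw, h1221, h2112, h123, h213, h312⟩ => ⟨⟨hw, h1221, h2112⟩, h123, h213, h312⟩⟩
  rw [hset, Set.ncard_coe_finset, List.toFinset_card_of_nodup (nodup_admissibleWords 1 m),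
    length_admissibleWords]
  omega
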